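/- Let R be a ring and a, b ∈ R with 1 - ab ∈ √Δ(R). Then 1 - ba ∈ √Δ(R) if and only if a is a unit of R. -/

import Mathlib

/-!
Elements of `√Δ(R)` lie in `1 - U(R)`, so `1 - ab, 1 - ba ∈ √Δ(R)` makes `ab` and `ba` units, and
then `a` has both a right and a left inverse. Conversely, for a unit `a` we have
`1 - ba = a⁻¹ (1 - ab) a`, and `√Δ(R)` is closed under conjugation by units.
-/

/-- Δ(R) = {x : 1 - x*u is a unit for every unit u}. -/
def Delta (R : Type*) [Ring R] : Set R :=
  {x | ∀ u : R, IsUnit u → IsUnit (1 - x * u)}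

/-- √Δ(R) = {x : x^n ∈ Δ(R) for some n ≥ 1}. -/
def sqrtDelta (R : Type*) [Ring R] : Set R :=
  {x | ∃ n : ℕ, 1 ≤ n ∧ x ^ n ∈ Delta R}

theorem isUnit_of_isUnit_mul_of_isUnit_mul {M : Type*} [Monoid M] {a b : M}
    (hab : IsUnit (a * b)) (hba : IsUnit (b * a)) : IsUnit a := by
  obtain ⟨c, hc⟩ := hab.exists_right_inv
  obtain ⟨d, hd⟩ := hba.exists_left_inv
  exact isUnit_iff_exists_and_exists.2
    ⟨⟨b * c, by rw [← mul_assoc, hc]⟩, ⟨d * b, by rw [mul_assoc, hd]⟩⟩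

theorem isUnit_one_sub_of_isUnit_one_sub_pow {R : Type*} [Ring R] {x : R} {n : ℕ}
    (h : IsUnit (1 - x ^ n)) : IsUnit (1 - x) := by
  have hcomm : Commute (1 - x) (∑ i ∈ Finset.range n, x ^ i) :=
    (mul_neg_geom_sum x n).trans (geom_sum_mul_neg x n).symm
  rw [← mul_neg_geom_sum x n, hcomm.isUnit_mul_iff] at h
  exact h.1

section

variable {R : Type*} [Ring R] {x : R}

theorem isUnit_one_sub_of_mem_Delta (hx : x ∈ Delta R) : IsUnit (1 - x) := by
  simpa using hx 1 isUnit_one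

theorem isUnit_one_sub_of_mem_sqrtDelta (hx : x ∈ sqrtDelta R) : IsUnit (1 - x) :=
  let ⟨_, _, hxn⟩ := hx
  isUnit_one_sub_of_isUnit_one_sub_pow (isUnit_one_sub_of_mem_Delta hxn)

theorem units_conj_mem_Delta (u : Rˣ) (hx : x ∈ Delta R) : ↑u⁻¹ * x * ↑u ∈ Delta R := by
  intro v hv
  have hconj : 1 - ↑u⁻¹ * x * ↑u * v = ↑u⁻¹ * (1 - x * (↑u * v * ↑u⁻¹)) * ↑u := by
    simp [mul_sub, sub_mul, mul_assoc]
  rw [hconj]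
  exact (u⁻¹.isUnit.mul (hx _ ((u.isUnit.mul hv).mul u⁻¹.isUnit))).mul u.isUnit

theorem units_conj_mem_sqrtDelta (u : Rˣ) (hx : x ∈ sqrtDelta R) :
    ↑u⁻¹ * x * ↑u ∈ sqrtDelta R :=
  let ⟨n, hn, hxn⟩ := hx
  ⟨n, hn, Units.conj_pow' u x n ▸ units_conj_mem_Delta u hxn⟩

end

theorem stmt_11 {R : Type*} [Ring R] (a b : R) (h : 1 - a * b ∈ sqrtDelta R) :
    1 - b * a ∈ sqrtDelta R ↔ IsUnit a := by
  constructor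
  · intro hba
    refine isUnit_of_isUnit_mul_of_isUnit_mul (b := b) ?_ ?_
    · simpa using isUnit_one_sub_of_mem_sqrtDelta h
    · simpa using isUnit_one_sub_of_mem_sqrtDelta hba
  · rintro ⟨u, rfl⟩
    have hconj : ↑u⁻¹ * (1 - ↑u * b) * ↑u = 1 - b * ↑u := by
      simp [mul_sub, sub_mul]
    simpa [hconj] using units_conj_mem_sqrtDelta u h
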